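/- Let g(u) = Σ_{i=0}^{n−1} ((T_s δ_{α,i} − a_i)/T_e) u^i with α ∈ [1,n−2] (so the leading coefficient is −a_{n−1}/T_e < 0) and h(u) = u^{α}(Σ_{i=0}^{n−2} b_i u^i)/(u^{α} + Σ_{i=0}^{n−2} q_i u^i), with all a_i, b_i, q_i, T_e > 0. If T_s > Σ_{i=0}^{n−1} a_i + T_e (Σ_{i=0}^{n−2} b_i)/(1 + Σ_{i=0}^{n−2} q_i), then g(1) > h(1); since g(0) < h(0) = 0 and g(u) < 0 < h(u) for all sufficiently large u, the equation g(u) = h(u) has at least one solution in (0,1) and at least one solution in (1,∞). -/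
import Mathlib


/-- `g(u) = ∑_{i=0}^{n-1} ((T_s δ_{α,i} - a_i)/T_e) u^i`. -/
noncomputable def gFun18 (n α : ℕ) (Ts Te : ℝ) (a : ℕ → ℝ) (u : ℝ) : ℝ :=
  ∑ i ∈ Finset.range n, (((if i = α then Ts else 0) - a i) / Te) * u ^ i

/-- `h(u) = u^α (∑_{i=0}^{n-2} b_i u^i) / (u^α + ∑_{i=0}^{n-2} q_i u^i)`. -/
noncomputable def hFun18 (n α : ℕ) (b q : ℕ → ℝ) (u : ℝ) : ℝ :=
  u ^ α * (∑ i ∈ Finset.range (n - 1), b i * u ^ i)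
    / (u ^ α + ∑ i ∈ Finset.range (n - 1), q i * u ^ i)

/-- **case `α ∈ [1, n-2]`.** With all `a_i, b_i, q_i, T_e > 0`, if
`T_s > ∑ a_i + T_e (∑ b_i)/(1 + ∑ q_i)` then `g 1 > h 1`; since `g 0 < h 0 = 0`
and `g u < 0 < h u` for all sufficiently large `u`, the equation `g(u) = h(u)`
has at least one solution in `(0,1)` and at least one in `(1,∞)`. -/
theorem futile_cycle_alpha_mid_existence
    (n α : ℕ) (hn : 3 ≤ n) (hα1 : 1 ≤ α) (hα2 : α ≤ n - 2)
    (Ts Te : ℝ) (hTe : 0 < Te)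
    (a b q : ℕ → ℝ)
    (ha : ∀ i ≤ n - 1, 0 < a i) (hb : ∀ i ≤ n - 2, 0 < b i)
    (hq : ∀ i ≤ n - 2, 0 < q i)
    (hTs : Ts > ∑ i ∈ Finset.range n, a i
        + Te * (∑ i ∈ Finset.range (n - 1), b i)
            / (1 + ∑ i ∈ Finset.range (n - 1), q i)) :
    gFun18 n α Ts Te a 1 > hFun18 n α b q 1
    ∧ gFun18 n α Ts Te a 0 < hFun18 n α b q 0
    ∧ hFun18 n α b q 0 = 0
    ∧ (∃ M : ℝ, ∀ u : ℝ, M < u →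
        gFun18 n α Ts Te a u < 0 ∧ 0 < hFun18 n α b q u)
    ∧ (∃ u : ℝ, 0 < u ∧ u < 1 ∧ gFun18 n α Ts Te a u = hFun18 n α b q u)
    ∧ (∃ u : ℝ, 1 < u ∧ gFun18 n α Ts Te a u = hFun18 n α b q u) := by
  have hαn : α < n := by omega
  have hαn1 : α ≠ n - 1 := by omega
  have hn1 : 0 < n - 1 := by omega
  -- positivity of denominator of h on [0,∞)
  have hden : ∀ u : ℝ, 0 ≤ u →
      0 < u ^ α + ∑ i ∈ Finset.range (n - 1), q i * u ^ i := by
    intro u hu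
    apply add_pos_of_nonneg_of_pos (pow_nonneg hu α)
    apply Finset.sum_pos'
    · intro i hi
      have hi' := Finset.mem_range.mp hi
      exact mul_nonneg (hq i (by omega)).le (pow_nonneg hu i)
    · refine ⟨0, Finset.mem_range.mpr hn1, ?_⟩
      simpa using hq 0 (by omega)
  -- positivity of h on (0,∞)
  have hpos : ∀ u : ℝ, 0 < u → 0 < hFun18 n α b q u := by
    intro u hu
    unfold hFun18
    apply div_pos _ (hden u hu.le)
    apply mul_pos (pow_pos hu α)
    apply Finset.sum_pos
    · intro i hi
      have hi' := Finset.mem_range.mp hi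
      exact mul_pos (hb i (by omega)) (pow_pos hu i)
    · exact ⟨0, Finset.mem_range.mpr hn1⟩
  -- values at 1
  have hα_mem : α ∈ Finset.range n := Finset.mem_range.mpr hαn
  have hg1 : gFun18 n α Ts Te a 1 = (Ts - ∑ i ∈ Finset.range n, a i) / Te := by
    unfold gFun18
    simp only [one_pow, mul_one]
    rw [← Finset.sum_div]
    congr 1
    rw [Finset.sum_sub_distrib]
    congr 1
    simp [Finset.sum_ite_eq', hα_mem]
  have hh1 : hFun18 n α b q 1 = (∑ i ∈ Finset.range (n - 1), b i)
      / (1 + ∑ i ∈ Finset.range (n - 1), q i) := by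
    unfold hFun18; simp
  have hq1pos : (0:ℝ) < 1 + ∑ i ∈ Finset.range (n - 1), q i := by
    have : (0:ℝ) ≤ ∑ i ∈ Finset.range (n - 1), q i :=
      Finset.sum_nonneg fun i hi =>
        (hq i (by have := Finset.mem_range.mp hi; omega)).le
    linarith
  have h1 : gFun18 n α Ts Te a 1 > hFun18 n α b q 1 := by
    rw [hg1, hh1, gt_iff_lt, div_lt_div_iff₀ hq1pos hTe]
    have h2 : Te * (∑ i ∈ Finset.range (n - 1), b i)
        / (1 + ∑ i ∈ Finset.range (n - 1), q i)
        < Ts - ∑ i ∈ Finset.range n, a i := by linarith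
    rw [div_lt_iff₀ hq1pos] at h2
    nlinarith [h2]
  -- value at 0
  have hg0 : gFun18 n α Ts Te a 0 = -a 0 / Te := by
    unfold gFun18
    rw [Finset.sum_eq_single_of_mem 0 (Finset.mem_range.mpr (by omega))]
    · have : (0:ℕ) ≠ α := by omega
      simp [this]
    · intro i _ hi
      simp [zero_pow hi]
  have hh0 : hFun18 n α b q 0 = 0 := by
    unfold hFun18
    rw [zero_pow (by omega : α ≠ 0)]
    simp
  have h02 : gFun18 n α Ts Te a 0 < hFun18 n α b q 0 := by
    rw [hg0, hh0]
    have := ha 0 (by omega)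
    exact div_neg_of_neg_of_pos (by linarith) hTe
  -- polynomial representation of g
  set c : ℕ → ℝ := fun i => ((if i = α then Ts else 0) - a i) / Te with hc
  set P : Polynomial ℝ := ∑ i ∈ Finset.range n, Polynomial.C (c i) * Polynomial.X ^ i
    with hP
  have hgP : ∀ u : ℝ, gFun18 n α Ts Te a u = P.eval u := by
    intro u
    unfold gFun18
    simp [hP, Polynomial.eval_finset_sum, hc]
  have hcoeff : ∀ k, P.coeff k = if k < n then c k else 0 := by
    intro k
    rw [hP, Polynomial.finset_sum_coeff]
    simp only [Polynomial.coeff_C_mul, Polynomial.coeff_X_pow]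
    rw [Finset.sum_congr rfl (fun i _ => by rw [mul_ite, mul_one, mul_zero])]
    rw [Finset.sum_ite_eq (Finset.range n) k (fun i => c i)]
    simp [Finset.mem_range]
  have hcn1 : c (n - 1) < 0 := by
    have := ha (n - 1) le_rfl
    have hne : n - 1 ≠ α := by omega
    simp only [hc, if_neg hne]
    exact div_neg_of_neg_of_pos (by linarith) hTe
  have hPne : P.coeff (n - 1) ≠ 0 := by
    rw [hcoeff]
    rw [if_pos (by omega)]
    exact ne_of_lt hcn1
  have hdegle : P.natDegree ≤ n - 1 := by
    apply Polynomial.natDegree_sum_le_of_forall_le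
    intro i hi
    have hi' := Finset.mem_range.mp hi
    calc (Polynomial.C (c i) * Polynomial.X ^ i).natDegree ≤ i := by
          simpa using Polynomial.natDegree_C_mul_X_pow_le (c i) i
      _ ≤ n - 1 := by omega
  have hdeg : P.natDegree = n - 1 :=
    le_antisymm hdegle (Polynomial.le_natDegree_of_ne_zero hPne)
  have hP0 : P ≠ 0 := fun h => hPne (by simp [h])
  have hdegpos : 0 < P.degree := by
    rw [Polynomial.degree_eq_natDegree hP0, hdeg]
    exact_mod_cast (by omega : 0 < n - 1)
  have hlead : P.leadingCoeff ≤ 0 := by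
    rw [Polynomial.leadingCoeff, hdeg]
    rw [hcoeff, if_pos (by omega)]
    exact hcn1.le
  have htend : Filter.Tendsto (fun u => P.eval u) Filter.atTop Filter.atBot :=
    Polynomial.tendsto_atBot_of_leadingCoeff_nonpos P hdegpos hlead
  obtain ⟨M, hM⟩ := (Filter.tendsto_atBot.mp htend (-1)).exists_forall_of_atTop
  have hgneg : ∀ u : ℝ, M < u → gFun18 n α Ts Te a u < 0 := by
    intro u hu
    rw [hgP]
    have := hM u hu.le
    linarith
  -- part 4
  have h4 : ∃ M : ℝ, ∀ u : ℝ, M < u →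
      gFun18 n α Ts Te a u < 0 ∧ 0 < hFun18 n α b q u := by
    refine ⟨max M 0, fun u hu => ⟨hgneg u (lt_of_le_of_lt (le_max_left _ _) hu),
      hpos u (lt_of_le_of_lt (le_max_right _ _) hu)⟩⟩
  -- continuity of f = g - h on [0,∞)
  have hcontg : Continuous (gFun18 n α Ts Te a) := by
    unfold gFun18
    exact continuous_finset_sum _ fun i _ => continuous_const.mul (continuous_pow i)
  have hconth : ContinuousOn (hFun18 n α b q) (Set.Ici 0) := by
    unfold hFun18
    apply ContinuousOn.div
    · exact Continuous.continuousOn ((continuous_pow α).mul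
        (continuous_finset_sum _ fun i _ => continuous_const.mul (continuous_pow i)))
    · exact Continuous.continuousOn ((continuous_pow α).add
        (continuous_finset_sum _ fun i _ => continuous_const.mul (continuous_pow i)))
    · intro u hu
      exact (hden u hu).ne'
  set f : ℝ → ℝ := fun u => gFun18 n α Ts Te a u - hFun18 n α b q u with hf
  have hcontf : ContinuousOn f (Set.Ici 0) :=
    (hcontg.continuousOn).sub hconth
  have hf0 : f 0 < 0 := by simp only [hf]; rw [hh0] at h02 ⊢; linarith
  have hf1 : 0 < f 1 := by simp only [hf]; linarith
  -- solution in (0,1)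
  have sol1 : ∃ u : ℝ, 0 < u ∧ u < 1 ∧ gFun18 n α Ts Te a u = hFun18 n α b q u := by
    have : (0:ℝ) ∈ Set.Ioo (f 0) (f 1) := ⟨hf0, hf1⟩
    have := intermediate_value_Ioo (by norm_num : (0:ℝ) ≤ 1)
      (hcontf.mono (by intro x hx; exact hx.1)) this
    obtain ⟨u, hu, hfu⟩ := this
    exact ⟨u, hu.1, hu.2, by simp only [hf] at hfu; linarith⟩
  -- solution in (1,∞)
  have sol2 : ∃ u : ℝ, 1 < u ∧ gFun18 n α Ts Te a u = hFun18 n α b q u := by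
    set M' : ℝ := max M 1 + 1 with hM'
    have hM'1 : 1 < M' := by
      have := le_max_right M 1
      simp only [hM']; linarith
    have hfM' : f M' < 0 := by
      have hg := hgneg M' (by have := le_max_left M 1; simp only [hM']; linarith)
      have hh := hpos M' (by linarith)
      simp only [hf]; linarith
    have : (0:ℝ) ∈ Set.Ioo (f M') (f 1) := ⟨hfM', hf1⟩
    have := intermediate_value_Ioo' hM'1.le
      (hcontf.mono (by intro x hx; exact le_trans (by norm_num) hx.1)) this
    obtain ⟨u, hu, hfu⟩ := this
    exact ⟨u, hu.1, by simp only [hf] at hfu; linarith⟩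
  exact ⟨h1, h02, hh0, h4, sol1, sol2⟩
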